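/- Let φ be a positive integer, and let P be a symmetric positive-definite real φ×φ matrix with smallest eigenvalue λ₁ > 0 and largest eigenvalue λφ ≥ λ₁. Let ρ : ℝ≥0 → ℝ≥0 be continuous and strictly increasing, let k₂, k_min, λ_V, δ > 0 satisfy the gain condition k_min > λ_V + (1/k₂)·ρ(√(λφ·δ/(λ₁·λ_V))), and set M := ρ̄⁻¹(k₂(k_min − λ_V) − ρ(0)), where ρ̄(s) := ρ(s) − ρ(0). Let t₀ ≥ 0 and let z : [t₀, ∞) → ℝ^φ be continuously differentiable with ‖z(t₀)‖ ≤ √(λ₁/λφ)·M − √(δ/λ_V), and suppose that for every t ≥ t₀ such that ‖z(s)‖ ≤ M for all s ∈ [t₀, t], the Lyapunov function V(z) := (1/2)·zᵀPz satisfies the derivative bound (d/dt)V(z(t)) ≤ −(k_min − ρ(‖z(t)‖)/k₂)·‖z(t)‖² + δ. Then ‖z(t)‖ ≤ M for all t ≥ t₀, and moreover ‖z(t)‖ ≤ √( (λφ/λ₁)·‖z(t₀)‖²·e^{−(2λ_V/λφ)(t−t₀)} + (λφ·δ/(λ₁·λ_V))·(1 − e^{−(2λ_V/λφ)(t−t₀)})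 ) for all t ≥ t₀. -/

import Mathlib

open Matrix

set_option maxHeartbeats 2000000 in
/-- Lyapunov-based stability core of the paper's main theorem:
Let `P` be a symmetric positive-definite `φ×φ` real matrix whose smallest eigenvalue is
`λ₁ > 0` and largest eigenvalue is `λφ ≥ λ₁` (expressed via the Rayleigh-quotient
characterization `λ₁‖x‖² ≤ xᵀPx ≤ λφ‖x‖²`).  Let `ρ : ℝ≥0 → ℝ≥0` be continuous and
strictly increasing, let `k₂, k_min, λ_V, δ > 0` satisfy the gain condition
`k_min > λ_V + (1/k₂)·ρ(√(λφ·δ/(λ₁·λ_V)))`, and let `M := ρ̄⁻¹(k₂(k_min − λ_V) − ρ(0))`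
(where `ρ̄(s) = ρ(s) − ρ(0)`, i.e. `M ≥ 0` with `ρ(M) = k₂(k_min − λ_V)`).
Let `z : [t₀,∞) → ℝ^φ` be continuously differentiable with
`‖z(t₀)‖ ≤ √(λ₁/λφ)·M − √(δ/λ_V)`, and suppose that for every `t ≥ t₀` such that
`‖z(s)‖ ≤ M` for all `s ∈ [t₀,t]`, the Lyapunov function `V(z) = (1/2)zᵀPz` satisfies
`(d/dt)V(z(t)) ≤ −(k_min − ρ(‖z(t)‖)/k₂)‖z(t)‖² + δ`.  Then `‖z(t)‖ ≤ M` for all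
`t ≥ t₀`, and moreover the exponential ultimate bound holds. -/
theorem stmt_0 (φ : ℕ) (P : Matrix (Fin φ) (Fin φ) ℝ) (hPsymm : P.IsSymm)
    (lam1 lamφ : ℝ) (hlam1 : 0 < lam1) (hlam : lam1 ≤ lamφ)
    (hRayleigh : ∀ x : EuclideanSpace ℝ (Fin φ),
      lam1 * ‖x‖ ^ 2 ≤ x ⬝ᵥ P.mulVec x ∧ x ⬝ᵥ P.mulVec x ≤ lamφ * ‖x‖ ^ 2)
    (ρ : ℝ → ℝ) (hρcont : ContinuousOn ρ (Set.Ici 0))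
    (hρmono : StrictMonoOn ρ (Set.Ici 0)) (hρnonneg : ∀ s ∈ Set.Ici (0 : ℝ), 0 ≤ ρ s)
    (k₂ kmin lamV δ : ℝ) (hk₂ : 0 < k₂) (hkmin : 0 < kmin) (hlamV : 0 < lamV) (hδ : 0 < δ)
    (hgain : kmin > lamV + (1 / k₂) * ρ (Real.sqrt (lamφ * δ / (lam1 * lamV))))
    (M : ℝ) (hM0 : 0 ≤ M) (hM : ρ M = k₂ * (kmin - lamV))
    (t₀ : ℝ) (ht₀ : 0 ≤ t₀)
    (z : ℝ → EuclideanSpace ℝ (Fin φ)) (hz : ContDiffOn ℝ 1 z (Set.Ici t₀))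
    (hinit : ‖z t₀‖ ≤ Real.sqrt (lam1 / lamφ) * M - Real.sqrt (δ / lamV))
    (hderiv : ∀ t, t₀ ≤ t → (∀ s ∈ Set.Icc t₀ t, ‖z s‖ ≤ M) →
      derivWithin (fun τ => (1 / 2) * (z τ ⬝ᵥ P.mulVec (z τ))) (Set.Ici t₀) t ≤
        -(kmin - ρ ‖z t‖ / k₂) * ‖z t‖ ^ 2 + δ) :
    ∀ t, t₀ ≤ t → ‖z t‖ ≤ M ∧
      ‖z t‖ ≤ Real.sqrt ((lamφ / lam1) * ‖z t₀‖ ^ 2 * Real.exp (-(2 * lamV / lamφ) * (t - t₀))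
        + (lamφ * δ / (lam1 * lamV)) * (1 - Real.exp (-(2 * lamV / lamφ) * (t - t₀)))) := by
  have hφpos : 0 < lamφ := lt_of_lt_of_le hlam1 hlam
  set a : ℝ := 2 * lamV / lamφ with ha_def
  have ha : 0 < a := by positivity
  have haφ : a * lamφ = 2 * lamV := by rw [ha_def]; field_simp
  set c : ℝ := lamφ * δ / (2 * lamV) with hc_def
  have hac : a * c = δ := by rw [ha_def, hc_def]; field_simp
  have hcpos : 0 < c := by positivity
  set V : ℝ → ℝ := fun τ => (1 / 2) * (z τ ⬝ᵥ P.mulVec (z τ)) with hV_def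
  -- differentiability of V
  have hzd : DifferentiableOn ℝ z (Set.Ici t₀) := hz.differentiableOn one_ne_zero
  have hVdiff : DifferentiableOn ℝ V (Set.Ici t₀) := by
    have h1 : ∀ i, DifferentiableOn ℝ (fun τ => z τ i) (Set.Ici t₀) := by
      intro i
      have := (EuclideanSpace.proj i (𝕜 := ℝ)).differentiable.comp_differentiableOn hzd
      exact this
    have heq : V = fun τ => (1 / 2 : ℝ) * ∑ i, z τ i * ∑ j, P i j * z τ j := by
      funext τ; simp [hV_def, dotProduct, Matrix.mulVec]
    rw [heq]
    exact (DifferentiableOn.fun_sum fun i _ => (h1 i).mul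
      (DifferentiableOn.fun_sum fun j _ => ((h1 j).const_mul _))).const_mul _
  -- r and its basic facts
  set r : ℝ := Real.sqrt (lamφ * δ / (lam1 * lamV)) with hr_def
  have hrpos : 0 < r := Real.sqrt_pos.2 (by positivity)
  have hr2 : r ^ 2 = lamφ * δ / (lam1 * lamV) := Real.sq_sqrt (by positivity)
  have hrM : r < M := by
    by_contra h
    push_neg at h
    have h1 : ρ M ≤ ρ r :=
      hρmono.monotoneOn (Set.mem_Ici.2 hM0) (Set.mem_Ici.2 hrpos.le) h
    have h2 : ρ r < k₂ * (kmin - lamV) := by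
      have h3 : (1 / k₂) * ρ r < kmin - lamV := by linarith
      have h4 := mul_lt_mul_of_pos_left h3 hk₂
      rw [← mul_assoc, mul_one_div, div_self (ne_of_gt hk₂), one_mul] at h4
      exact h4
    rw [hM] at h1
    linarith
  have hMpos : 0 < M := hrpos.trans hrM
  -- bound on initial norm
  have hsq1 : Real.sqrt (lamφ / lam1) * Real.sqrt (lam1 / lamφ) = 1 := by
    rw [← Real.sqrt_mul (by positivity)]
    rw [show lamφ / lam1 * (lam1 / lamφ) = 1 by field_simp]
    exact Real.sqrt_one
  have hsq2 : Real.sqrt (lamφ / lam1) * Real.sqrt (δ / lamV) = r := by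
    rw [← Real.sqrt_mul (by positivity), hr_def]
    congr 1
    field_simp
  have hz0 : Real.sqrt (lamφ / lam1) * ‖z t₀‖ ≤ M - r := by
    have h1 : Real.sqrt (lamφ / lam1) * ‖z t₀‖ ≤
        Real.sqrt (lamφ / lam1) * (Real.sqrt (lam1 / lamφ) * M - Real.sqrt (δ / lamV)) :=
      mul_le_mul_of_nonneg_left hinit (Real.sqrt_nonneg _)
    calc Real.sqrt (lamφ / lam1) * ‖z t₀‖ ≤ _ := h1
      _ = M - r := by rw [mul_sub, ← mul_assoc, hsq1, hsq2, one_mul]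
  have hq1 : (lamφ / lam1) * ‖z t₀‖ ^ 2 ≤ (M - r) ^ 2 := by
    have h0 : 0 ≤ Real.sqrt (lamφ / lam1) * ‖z t₀‖ := by positivity
    have hsq : (Real.sqrt (lamφ / lam1)) ^ 2 = lamφ / lam1 := Real.sq_sqrt (by positivity)
    nlinarith [hz0, h0]
  -- the core Grönwall estimate
  have key : ∀ T, t₀ ≤ T → (∀ s ∈ Set.Icc t₀ T, ‖z s‖ ≤ M) →
      ∀ t ∈ Set.Icc t₀ T, ‖z t‖ ^ 2 ≤
        (lamφ / lam1) * ‖z t₀‖ ^ 2 * Real.exp (-a * (t - t₀))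
          + (lamφ * δ / (lam1 * lamV)) * (1 - Real.exp (-a * (t - t₀))) := by
    intro T hT hgood t ht
    set W : ℝ → ℝ := fun τ => (V τ - c) * Real.exp (a * (τ - t₀)) with hW_def
    have hIccsub : Set.Icc t₀ T ⊆ Set.Ici t₀ := fun s hs => hs.1
    have hWcont : ContinuousOn W (Set.Icc t₀ T) := by
      apply ContinuousOn.mul
      · exact ((hVdiff.continuousOn.mono hIccsub).sub continuousOn_const)
      · exact (Real.continuous_exp.comp
          (continuous_const.mul (continuous_id.sub continuous_const))).continuousOn
    have hWdiffat : ∀ x ∈ Set.Ioo t₀ T, HasDerivAt W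
        (derivWithin V (Set.Ici t₀) x * Real.exp (a * (x - t₀))
          + (V x - c) * (Real.exp (a * (x - t₀)) * a)) x := by
      intro x hx
      have hxI : Set.Ici t₀ ∈ nhds x := Ici_mem_nhds hx.1
      have hVx : DifferentiableAt ℝ V x := (hVdiff x hx.1.le).differentiableAt hxI
      have hdeq : derivWithin V (Set.Ici t₀) x = deriv V x := derivWithin_of_mem_nhds hxI
      have hlin : HasDerivAt (fun τ : ℝ => a * (τ - t₀)) a x := by
        simpa using ((hasDerivAt_id x).sub_const t₀).const_mul a
      have hE : HasDerivAt (fun τ => Real.exp (a * (τ - t₀)))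
          (Real.exp (a * (x - t₀)) * a) x := hlin.exp
      rw [hdeq]
      exact (hVx.hasDerivAt.sub_const c).mul hE
    have hWderiv : ∀ x ∈ interior (Set.Icc t₀ T), deriv W x ≤ 0 := by
      intro x hx
      rw [interior_Icc] at hx
      rw [(hWdiffat x hx).deriv]
      set E := Real.exp (a * (x - t₀)) with hE_def
      have hEpos : 0 < E := Real.exp_pos _
      have hVd : derivWithin V (Set.Ici t₀) x ≤ -(kmin - ρ ‖z x‖ / k₂) * ‖z x‖ ^ 2 + δ :=
        hderiv x hx.1.le (fun s hs => hgood s ⟨hs.1, hs.2.trans hx.2.le⟩)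
      have hρle : ρ ‖z x‖ ≤ ρ M := by
        have hzx : ‖z x‖ ≤ M := hgood x ⟨hx.1.le, hx.2.le⟩
        rcases eq_or_lt_of_le hzx with h' | h'
        · rw [h']
        · exact le_of_lt (hρmono (Set.mem_Ici.2 (norm_nonneg _)) (Set.mem_Ici.2 hM0) h')
      have h1 : -(kmin - ρ ‖z x‖ / k₂) * ‖z x‖ ^ 2 + δ ≤ -lamV * ‖z x‖ ^ 2 + δ := by
        rw [hM] at hρle
        have h2 : ρ ‖z x‖ / k₂ ≤ kmin - lamV := by
          rw [div_le_iff₀ hk₂]; nlinarith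
        nlinarith [sq_nonneg ‖z x‖]
      have h2 : a * V x ≤ lamV * ‖z x‖ ^ 2 := by
        have h3 := (hRayleigh (z x)).2
        have h4 : (a / 2) * (z x ⬝ᵥ P.mulVec (z x)) ≤ (a / 2) * (lamφ * ‖z x‖ ^ 2) :=
          mul_le_mul_of_nonneg_left h3 (by positivity)
        have h5 : a * V x = (a / 2) * (z x ⬝ᵥ P.mulVec (z x)) := by
          rw [hV_def]; ring
        nlinarith
      have hVdle : derivWithin V (Set.Ici t₀) x ≤ -a * V x + δ := by linarith
      have := mul_le_mul_of_nonneg_right hVdle hEpos.le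
      nlinarith [hac]
    have hWdiffon : DifferentiableOn ℝ W (interior (Set.Icc t₀ T)) := by
      rw [interior_Icc]
      exact fun x hx => ((hWdiffat x hx).differentiableAt).differentiableWithinAt
    have hanti := antitoneOn_of_deriv_nonpos (convex_Icc t₀ T) hWcont hWdiffon hWderiv
    have hWle : W t ≤ W t₀ := hanti (Set.left_mem_Icc.2 hT) ht ht.1
    -- unfold W
    set E : ℝ := Real.exp (a * (t - t₀)) with hE_def
    have hEpos : 0 < E := Real.exp_pos _
    have hE' : Real.exp (-a * (t - t₀)) = E⁻¹ := by
      rw [hE_def, ← Real.exp_neg]; ring_nf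
    have hWle' : (V t - c) * E ≤ V t₀ - c := by
      have hWt₀ : W t₀ = V t₀ - c := by simp [hW_def]
      rw [← hWt₀]; exact hWle
    have hVt : V t ≤ (V t₀ - c) * E⁻¹ + c := by
      have h1 : (V t - c) * E * E⁻¹ ≤ (V t₀ - c) * E⁻¹ :=
        mul_le_mul_of_nonneg_right hWle' (by positivity)
      rw [mul_assoc, mul_inv_cancel₀ (ne_of_gt hEpos), mul_one] at h1
      linarith
    have hlow := (hRayleigh (z t)).1
    have hup := (hRayleigh (z t₀)).2
    have hEinv_nonneg : (0:ℝ) ≤ E⁻¹ := by positivity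
    -- lam1 * ‖z t‖² ≤ lamφ‖z t₀‖² E⁻¹ + 2c(1−E⁻¹)
    have hmain : lam1 * ‖z t‖ ^ 2 ≤ lamφ * ‖z t₀‖ ^ 2 * E⁻¹ + 2 * c * (1 - E⁻¹) := by
      have h1 : lam1 * ‖z t‖ ^ 2 ≤ 2 * V t := by rw [hV_def]; nlinarith
      have h2 : 2 * V t₀ ≤ lamφ * ‖z t₀‖ ^ 2 := by rw [hV_def]; nlinarith
      nlinarith [mul_le_mul_of_nonneg_right h2 hEinv_nonneg]
    rw [hE']
    have h2c : 2 * c = lamφ * δ / lamV := by rw [hc_def]; field_simp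
    have hgoal : (lamφ / lam1) * ‖z t₀‖ ^ 2 * E⁻¹ + lamφ * δ / (lam1 * lamV) * (1 - E⁻¹)
        = (lamφ * ‖z t₀‖ ^ 2 * E⁻¹ + 2 * c * (1 - E⁻¹)) / lam1 := by
      rw [h2c]; field_simp
    rw [hgoal, le_div_iff₀ hlam1]
    nlinarith [hmain]
  -- strict bound on the Grönwall expression
  have hBlt : ∀ t, t₀ ≤ t →
      (lamφ / lam1) * ‖z t₀‖ ^ 2 * Real.exp (-a * (t - t₀))
        + (lamφ * δ / (lam1 * lamV)) * (1 - Real.exp (-a * (t - t₀))) < M ^ 2 := by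
    intro t ht
    set E' : ℝ := Real.exp (-a * (t - t₀)) with hE'_def
    have hE'pos : 0 < E' := Real.exp_pos _
    have hE'le : E' ≤ 1 := by
      rw [hE'_def, Real.exp_le_one_iff]
      nlinarith
    rw [← hr2]
    nlinarith [hq1, hrM, hrpos, hMpos, hE'pos, hE'le]
  -- initial point strictly inside
  have hginit : ‖z t₀‖ < M := by
    have h1 : Real.sqrt (lam1 / lamφ) ≤ 1 := by
      rw [show (1:ℝ) = Real.sqrt 1 by simp]
      exact Real.sqrt_le_sqrt (by rw [div_le_one hφpos]; exact hlam)
    have h2 : Real.sqrt (lam1 / lamφ) * M ≤ M := by nlinarith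
    have h3 : 0 < Real.sqrt (δ / lamV) := Real.sqrt_pos.2 (by positivity)
    linarith
  -- invariance
  have hgcont : ContinuousOn (fun t => ‖z t‖) (Set.Ici t₀) := hz.continuousOn.norm
  have hinv : ∀ t, t₀ ≤ t → ‖z t‖ ≤ M := by
    by_contra h
    push_neg at h
    obtain ⟨t₁, ht₁, hbad⟩ := h
    set A : Set ℝ := {t | t₀ ≤ t ∧ M < ‖z t‖} with hA_def
    have hAne : A.Nonempty := ⟨t₁, ht₁, hbad⟩
    have hAbdd : BddBelow A := ⟨t₀, fun x hx => hx.1⟩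
    set T := sInf A with hT_def
    have hTt₀ : t₀ ≤ T := le_csInf hAne fun x hx => hx.1
    have hbefore : ∀ s, t₀ ≤ s → s < T → ‖z s‖ ≤ M := by
      intro s hs hsT
      by_contra hs'
      exact absurd (csInf_le hAbdd ⟨hs, lt_of_not_ge hs'⟩) (not_le.2 hsT)
    have hTle : ‖z T‖ ≤ M := by
      rcases eq_or_lt_of_le hTt₀ with h | h
      · rw [← h]; exact hginit.le
      · have hclos : T ∈ closure (Set.Ico t₀ T) := by
          rw [closure_Ico (ne_of_lt h)]
          exact ⟨hTt₀, le_rfl⟩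
        have hne : (nhdsWithin T (Set.Ico t₀ T)).NeBot :=
          mem_closure_iff_nhdsWithin_neBot.1 hclos
        have hct : ContinuousWithinAt (fun t => ‖z t‖) (Set.Ico t₀ T) T :=
          (hgcont T hTt₀).mono (fun s hs => hs.1)
        exact le_of_tendsto hct (Filter.eventually_inf_principal.2
          (Filter.Eventually.of_forall fun s hs => hbefore s hs.1 hs.2))
      -- contradiction: key gives ‖z T‖ < M but T = inf of bad set
    have hgoodT : ∀ s ∈ Set.Icc t₀ T, ‖z s‖ ≤ M := fun s hs =>
      hs.2.lt_or_eq.elim (fun h' => hbefore s hs.1 h') (fun h' => h' ▸ hTle)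
    have h1 := key T hTt₀ hgoodT T ⟨hTt₀, le_rfl⟩
    have h2 : ‖z T‖ ^ 2 < M ^ 2 := lt_of_le_of_lt h1 (hBlt T hTt₀)
    have h3 : ‖z T‖ < M := by nlinarith [norm_nonneg (z T)]
    -- derive M ≤ ‖z T‖ for a contradiction
    have hev : ∀ᶠ s in nhdsWithin T (Set.Ici t₀), ‖z s‖ < M :=
      (hgcont T hTt₀).eventually (Filter.Tendsto.eventually_lt_const h3 Filter.tendsto_id) |>.mono
        (fun s hs => hs)
    rw [eventually_nhdsWithin_iff, Metric.eventually_nhds_iff] at hev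
    obtain ⟨ε, hεpos, hε⟩ := hev
    obtain ⟨b, hbA, hbT⟩ := exists_lt_of_csInf_lt hAne (show sInf A < T + ε by
      rw [← hT_def]; linarith)
    have hbge : T ≤ b := csInf_le hAbdd hbA
    have hdist : dist b T < ε := by
      rw [Real.dist_eq, abs_lt]; constructor <;> linarith
    have := hε hdist hbA.1
    exact absurd hbA.2 (not_lt.2 this.le)
  -- conclude
  intro t ht
  refine ⟨hinv t ht, ?_⟩
  have h1 := key t ht (fun s hs => hinv s hs.1) t ⟨ht, le_rfl⟩
  have h2 : -a * (t - t₀) = -(2 * lamV / lamφ) * (t - t₀) := by rw [ha_def]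
  rw [h2] at h1
  exact Real.le_sqrt_of_sq_le h1
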